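/- There exists θ₀ ∈ (0,1) such that for every θ ∈ (0,θ₀] there is a constant C > 0 with the following property: for all ε > 0, t ≥ 0 and r ≥ 1, the time derivative ∂_t D_ε(r,t) of the map t ↦ D_ε(r,t) satisfies (a) |∂_t D_ε(r,t)| ≤ C·e^{−θ·t·r²} if r ≤ (1+θ)/(2ε), and (b) |∂_t D_ε(r,t)| ≤ C·e^{−t/(2ε²)} if r > (1+θ)/(2ε). -/

import Mathlib

/-!
With `μ = 1/(2ε²)` and `a = μ² - 2μr²` one has `D_ε(r,t) = e^{-μt} t φ(at²)`, and
`t ↦ t φ(at²)` has derivative `ψ(at²)`, where `ψ` is the even series behind `cosh` and `cos`.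
Hence `∂_t D = e^{-μt} (ψ(at²) - μ t φ(at²))`.

* If `a ≤ 0`, then `ψ` and `φ` are `cos` and `sinc`, both bounded by `1`, so
  `|∂_t D| ≤ (1 + μt) e^{-μt}`.
* If `a = s² > 0`, writing `cosh x = e^{-x} + sinh x` leaves only the coefficient `(μ - s)/s`
  in front of `sinh`, so `|∂_t D| ≤ (1 + (μ - s)t) e^{-(μ - s)t}`.

In regime (a), both `μ` and `μ - s` are at least `r²`, and `(1 + X) e^{-X} ≤ 3 e^{-θX}`.
In regime (b), `a = -z²` with `z > θμ`, so `|cos(zt) - (μ/z) sin(zt)| ≤ 1 + 1/θ`.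
-/

/-- The entire function `φ(x) = ∑_{j=0}^∞ x^j/(2j+1)!`. -/
noncomputable def phi (x : ℝ) : ℝ := ∑' j : ℕ, x ^ j / (Nat.factorial (2 * j + 1) : ℝ)

/-- The damped-wave Fourier symbol `D_ε(r,t) = e^{−t/(2ε²)}·t·φ(t²(1/(4ε⁴) − r²/ε²))`. -/
noncomputable def D (ε r t : ℝ) : ℝ :=
  Real.exp (-t / (2 * ε ^ 2)) * t * phi (t ^ 2 * (1 / (4 * ε ^ 4) - r ^ 2 / ε ^ 2))

open Real

noncomputable def psi (x : ℝ) : ℝ := ∑' j : ℕ, x ^ j / (Nat.factorial (2 * j) : ℝ)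

lemma mul_phi_sq (u : ℝ) : u * phi (u ^ 2) = sinh u := by
  have h : HasSum (fun j : ℕ => u * ((u ^ 2) ^ j / (Nat.factorial (2 * j + 1) : ℝ)))
      (sinh u) := by
    convert hasSum_sinh u using 2 with j
    rw [← pow_mul]
    ring
  rw [phi, ← tsum_mul_left, h.tsum_eq]

lemma mul_phi_neg_sq (u : ℝ) : u * phi (-u ^ 2) = sin u := by
  have h : HasSum (fun j : ℕ => u * ((-u ^ 2) ^ j / (Nat.factorial (2 * j + 1) : ℝ)))
      (sin u) := by
    convert hasSum_sin u using 2 with j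
    rw [neg_pow, ← pow_mul]
    ring
  rw [phi, ← tsum_mul_left, h.tsum_eq]

lemma psi_sq (u : ℝ) : psi (u ^ 2) = cosh u := by
  simpa only [psi, ← pow_mul] using (hasSum_cosh u).tsum_eq

lemma psi_neg_sq (u : ℝ) : psi (-u ^ 2) = cos u := by
  have h : HasSum (fun j : ℕ => (-u ^ 2) ^ j / (Nat.factorial (2 * j) : ℝ)) (cos u) := by
    convert hasSum_cos u using 2 with j
    rw [neg_pow, ← pow_mul, mul_div_assoc]
  exact h.tsum_eq

lemma phi_zero : phi 0 = 1 := by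
  rw [phi, tsum_eq_single 0 fun j hj => by simp [zero_pow hj]]
  simp

lemma psi_zero : psi 0 = 1 := by
  simpa using psi_sq 0

lemma phi_neg_sq (u : ℝ) : phi (-u ^ 2) = sinc u := by
  rcases eq_or_ne u 0 with rfl | hu
  · simp [phi_zero]
  · rw [sinc_of_ne_zero hu, ← mul_phi_neg_sq u, mul_div_cancel_left₀ _ hu]

lemma abs_phi_le_one {x : ℝ} (hx : x ≤ 0) : |phi x| ≤ 1 := by
  have := phi_neg_sq √(-x)
  rw [sq_sqrt (neg_nonneg.2 hx), neg_neg] at this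
  exact this ▸ abs_sinc_le_one _

lemma abs_psi_le_one {x : ℝ} (hx : x ≤ 0) : |psi x| ≤ 1 := by
  have := psi_neg_sq √(-x)
  rw [sq_sqrt (neg_nonneg.2 hx), neg_neg] at this
  exact this ▸ abs_cos_le_one _

lemma hasDerivAt_mul_phi (a t : ℝ) :
    HasDerivAt (fun t => t * phi (a * t ^ 2)) (psi (a * t ^ 2)) t := by
  rcases lt_trichotomy a 0 with ha | rfl | ha
  · obtain ⟨z, hz, rfl⟩ : ∃ z : ℝ, z ≠ 0 ∧ a = -z ^ 2 :=
      ⟨√(-a), (sqrt_pos.2 (neg_pos.2 ha)).ne', by rw [sq_sqrt (neg_nonneg.2 ha.le), neg_neg]⟩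
    have hsin : (fun t => t * phi (-z ^ 2 * t ^ 2)) = fun t => sin (z * t) / z := by
      funext t
      rw [eq_div_iff hz, ← mul_phi_neg_sq]
      ring_nf
    rw [hsin, show -z ^ 2 * t ^ 2 = -(z * t) ^ 2 by ring, psi_neg_sq]
    simpa [hz] using ((hasDerivAt_id t).const_mul z).sin.div_const z
  · simpa [phi_zero, psi_zero] using hasDerivAt_id' t
  · obtain ⟨s, hs, rfl⟩ : ∃ s : ℝ, s ≠ 0 ∧ a = s ^ 2 :=
      ⟨√a, (sqrt_pos.2 ha).ne', (sq_sqrt ha.le).symm⟩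
    have hsinh : (fun t => t * phi (s ^ 2 * t ^ 2)) = fun t => sinh (s * t) / s := by
      funext t
      rw [eq_div_iff hs, ← mul_phi_sq]
      ring_nf
    rw [hsinh, show s ^ 2 * t ^ 2 = (s * t) ^ 2 by ring, psi_sq]
    simpa [hs] using ((hasDerivAt_id t).const_mul s).sinh.div_const s

noncomputable def dampedSymbol (μ a t : ℝ) : ℝ := exp (-(μ * t)) * (t * phi (a * t ^ 2))

lemma D_eq_dampedSymbol {ε : ℝ} (hε : ε ≠ 0) (r : ℝ) :
    D ε r =
      dampedSymbol (1 / (2 * ε ^ 2)) ((1 / (2 * ε ^ 2)) ^ 2 - 2 * (1 / (2 * ε ^ 2)) * r ^ 2) := by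
  funext t
  rw [D, dampedSymbol, mul_assoc]
  congr 3
  · ring
  · field_simp
    ring

lemma deriv_dampedSymbol (μ a t : ℝ) :
    deriv (dampedSymbol μ a) t =
      exp (-(μ * t)) * (psi (a * t ^ 2) - μ * (t * phi (a * t ^ 2))) := by
  have hexp : HasDerivAt (fun t => exp (-(μ * t))) (exp (-(μ * t)) * -μ) t := by
    simpa using ((hasDerivAt_id' t).const_mul μ).neg.exp
  have h : HasDerivAt (dampedSymbol μ a) _ t := hexp.mul (hasDerivAt_mul_phi a t)
  rw [h.deriv]
  ring

lemma sinh_le_mul_exp (x : ℝ) : sinh x ≤ x * exp x := by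
  have h : exp (-x) = exp x * exp (-(2 * x)) := by
    rw [← exp_add]
    ring_nf
  rw [sinh_eq, h]
  nlinarith [add_one_le_exp (-(2 * x)), exp_pos x]

lemma one_add_mul_exp_neg_le {c X : ℝ} (hc : c ≤ 1 / 2) (hX : 0 ≤ X) :
    (1 + X) * exp (-X) ≤ 3 * exp (-(c * X)) := by
  have hsplit : exp (-X) = exp (-((1 - c) * X)) * exp (-(c * X)) := by
    rw [← exp_add]
    ring_nf
  have hexp_le : exp (-X) ≤ exp (-(c * X)) := exp_le_exp.2 (by nlinarith)
  -- `X ≤ 2 (1 + (1 - c) X) ≤ 2 e^{(1-c)X}`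
  have hlin : X * exp (-((1 - c) * X)) ≤ 2 := by
    have := add_one_le_exp ((1 - c) * X)
    rw [exp_neg, ← div_eq_mul_inv, div_le_iff₀ (exp_pos _)]
    nlinarith
  have hmul : X * exp (-X) ≤ 2 * exp (-(c * X)) := by
    rw [hsplit, ← mul_assoc]
    exact mul_le_mul_of_nonneg_right hlin (exp_pos _).le
  linarith

lemma abs_deriv_dampedSymbol_le_of_nonpos {μ a t : ℝ} (hμ : 0 ≤ μ) (ha : a ≤ 0) (ht : 0 ≤ t) :
    |deriv (dampedSymbol μ a) t| ≤ (1 + μ * t) * exp (-(μ * t)) := by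
  have hat : a * t ^ 2 ≤ 0 := mul_nonpos_of_nonpos_of_nonneg ha (sq_nonneg t)
  have hphi : |μ * (t * phi (a * t ^ 2))| ≤ μ * t := by
    rw [abs_mul, abs_mul, abs_of_nonneg hμ, abs_of_nonneg ht]
    exact mul_le_mul_of_nonneg_left (mul_le_of_le_one_right ht (abs_phi_le_one hat)) hμ
  rw [deriv_dampedSymbol, abs_mul, abs_of_pos (exp_pos _), mul_comm]
  gcongr
  exact (abs_sub _ _).trans (add_le_add (abs_psi_le_one hat) hphi)

lemma abs_deriv_dampedSymbol_sq_le {μ s t : ℝ} (hs : 0 < s) (hsμ : s ≤ μ) (ht : 0 ≤ t) :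
    |deriv (dampedSymbol μ (s ^ 2)) t| ≤ (1 + (μ - s) * t) * exp (-((μ - s) * t)) := by
  have hst : s ^ 2 * t ^ 2 = (s * t) ^ 2 := by ring
  have hsinh : t * phi ((s * t) ^ 2) = sinh (s * t) / s := by
    rw [eq_div_iff hs.ne', ← mul_phi_sq]
    ring
  have hsinh0 : 0 ≤ sinh (s * t) := sinh_nonneg_iff.2 (mul_nonneg hs.le ht)
  have hcoef : 0 ≤ (μ - s) / s := div_nonneg (sub_nonneg.2 hsμ) hs.le
  have hsplit : cosh (s * t) - μ * (sinh (s * t) / s) =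
      exp (-(s * t)) - (μ - s) / s * sinh (s * t) := by
    rw [← cosh_sub_sinh]
    field_simp
    ring
  have hbound : (μ - s) / s * sinh (s * t) ≤ (μ - s) * t * exp (s * t) := by
    calc (μ - s) / s * sinh (s * t) ≤ (μ - s) / s * (s * t * exp (s * t)) :=
          mul_le_mul_of_nonneg_left (sinh_le_mul_exp _) hcoef
      _ = (μ - s) * t * exp (s * t) := by field_simp
  rw [deriv_dampedSymbol, hst, psi_sq, hsinh, hsplit, abs_mul, abs_of_pos (exp_pos _)]
  calc exp (-(μ * t)) * |exp (-(s * t)) - (μ - s) / s * sinh (s * t)|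
      ≤ exp (-(μ * t)) * (exp (-(s * t)) + (μ - s) * t * exp (s * t)) := by
        gcongr
        rw [abs_le]
        constructor <;> nlinarith [exp_pos (-(s * t)), mul_nonneg hcoef hsinh0]
    _ = exp (-((μ + s) * t)) + (μ - s) * t * exp (-((μ - s) * t)) := by
        rw [mul_add, ← exp_add, mul_left_comm, ← exp_add]
        ring_nf
    _ ≤ (1 + (μ - s) * t) * exp (-((μ - s) * t)) := by
        have : exp (-((μ + s) * t)) ≤ exp (-((μ - s) * t)) := exp_le_exp.2 (by nlinarith)
        linarith

lemma abs_deriv_dampedSymbol_neg_sq_le {μ z : ℝ} (t : ℝ) (hμ : 0 ≤ μ) (hz : 0 < z) :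
    |deriv (dampedSymbol μ (-z ^ 2)) t| ≤ (1 + μ / z) * exp (-(μ * t)) := by
  have hzt : -z ^ 2 * t ^ 2 = -(z * t) ^ 2 := by ring
  have hsin : t * phi (-(z * t) ^ 2) = sin (z * t) / z := by
    rw [eq_div_iff hz.ne', ← mul_phi_neg_sq]
    ring
  have hsinz : |μ * (sin (z * t) / z)| ≤ μ / z := by
    rw [abs_mul, abs_div, abs_of_nonneg hμ, abs_of_pos hz, mul_div_assoc']
    gcongr
    exact mul_le_of_le_one_right hμ (abs_sin_le_one _)
  rw [deriv_dampedSymbol, hzt, psi_neg_sq, hsin, abs_mul, abs_of_pos (exp_pos _), mul_comm]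
  gcongr
  exact (abs_sub _ _).trans (add_le_add (abs_cos_le_one _) hsinz)

lemma abs_deriv_dampedSymbol_le_of_le {θ μ ρ t : ℝ} (hθ0 : 0 ≤ θ) (hθ : θ ≤ 1 / 2)
    (hρ : 0 ≤ ρ) (hρμ : ρ ≤ μ) (ht : 0 ≤ t) :
    |deriv (dampedSymbol μ (μ ^ 2 - 2 * μ * ρ)) t| ≤ 3 * exp (-θ * t * ρ) := by
  have hμ : 0 ≤ μ := hρ.trans hρμ
  suffices h : ∃ κ, ρ ≤ κ ∧ |deriv (dampedSymbol μ (μ ^ 2 - 2 * μ * ρ)) t| ≤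
      (1 + κ * t) * exp (-(κ * t)) by
    obtain ⟨κ, hκ, hbound⟩ := h
    calc _ ≤ (1 + κ * t) * exp (-(κ * t)) := hbound
      _ ≤ 3 * exp (-(θ * (κ * t))) :=
          one_add_mul_exp_neg_le hθ (mul_nonneg (hρ.trans hκ) ht)
      _ ≤ 3 * exp (-θ * t * ρ) := by
          gcongr
          nlinarith [mul_nonneg hθ0 ht]
  rcases le_or_gt (μ ^ 2 - 2 * μ * ρ) 0 with ha | ha
  · exact ⟨μ, hρμ, abs_deriv_dampedSymbol_le_of_nonpos hμ ha ht⟩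
  · set s := √(μ ^ 2 - 2 * μ * ρ)
    have hs : 0 < s := sqrt_pos.2 ha
    have hs2 : s ^ 2 = μ ^ 2 - 2 * μ * ρ := sq_sqrt ha.le
    have hsμ : s ≤ μ := by nlinarith
    refine ⟨μ - s, by nlinarith, ?_⟩
    rw [← hs2]
    exact abs_deriv_dampedSymbol_sq_le hs hsμ ht

lemma abs_deriv_dampedSymbol_le_of_lt {θ μ ρ : ℝ} (t : ℝ) (hθ : 0 < θ) (hμ : 0 < μ)
    (hρ : (1 + θ) ^ 2 * μ < 2 * ρ) :
    |deriv (dampedSymbol μ (μ ^ 2 - 2 * μ * ρ)) t| ≤ (1 + 1 / θ) * exp (-(μ * t)) := by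
  set z := √(2 * μ * ρ - μ ^ 2)
  have hμρ : (1 + θ) ^ 2 * μ ^ 2 < 2 * μ * ρ := by nlinarith [mul_lt_mul_of_pos_left hρ hμ]
  have hθμ : 0 < θ * μ ^ 2 := by positivity
  have hz2 : z ^ 2 = 2 * μ * ρ - μ ^ 2 := sq_sqrt (by nlinarith)
  have hθz : θ * μ < z := lt_of_pow_lt_pow_left₀ 2 (sqrt_nonneg _) (by nlinarith)
  have hz : 0 < z := (mul_pos hθ hμ).trans hθz
  have hμz : μ / z ≤ 1 / θ := by
    rw [div_le_div_iff₀ hz hθ]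
    linarith
  calc _ = |deriv (dampedSymbol μ (-z ^ 2)) t| := by rw [hz2, neg_sub]
    _ ≤ (1 + μ / z) * exp (-(μ * t)) := abs_deriv_dampedSymbol_neg_sq_le t hμ.le hz
    _ ≤ (1 + 1 / θ) * exp (-(μ * t)) := by gcongr

/-- There is `θ₀ ∈ (0,1)` such that for every `θ ∈ (0,θ₀]` there is `C > 0` with:
for all `ε > 0`, `t ≥ 0`, `r ≥ 1`,
(a) `|∂_t D_ε(r,t)| ≤ C e^{−θtr²}` if `r ≤ (1+θ)/(2ε)`, and
(b) `|∂_t D_ε(r,t)| ≤ C e^{−t/(2ε²)}` if `r > (1+θ)/(2ε)`. -/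
theorem dampedWave_symbol_timeDeriv_bounds :
    ∃ θ₀ : ℝ, θ₀ ∈ Set.Ioo (0:ℝ) 1 ∧
      ∀ θ ∈ Set.Ioc (0:ℝ) θ₀, ∃ C : ℝ, 0 < C ∧
        ∀ ε t r : ℝ, 0 < ε → 0 ≤ t → 1 ≤ r →
          (r ≤ (1 + θ) / (2 * ε) →
            |deriv (D ε r) t| ≤ C * Real.exp (-θ * t * r ^ 2)) ∧
          ((1 + θ) / (2 * ε) < r →
            |deriv (D ε r) t| ≤ C * Real.exp (-t / (2 * ε ^ 2))) := by
  refine ⟨1 / 3, ⟨by norm_num, by norm_num⟩, fun θ ⟨hθ0, hθ⟩ => ⟨3 + 1 / θ, by positivity, ?_⟩⟩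
  intro ε t r hε ht hr
  rw [D_eq_dampedSymbol hε.ne' r]
  constructor
  · intro hra
    have h2εr : 2 * ε * r ≤ 1 + θ := by rwa [le_div_iff₀ (by positivity), mul_comm] at hra
    have hrμ : r ^ 2 ≤ 1 / (2 * ε ^ 2) := by
      rw [le_div_iff₀ (by positivity)]
      nlinarith [mul_self_le_mul_self (by positivity) h2εr]
    calc _ ≤ 3 * exp (-θ * t * r ^ 2) :=
          abs_deriv_dampedSymbol_le_of_le hθ0.le (by linarith) (sq_nonneg r) hrμ ht
      _ ≤ (3 + 1 / θ) * exp (-θ * t * r ^ 2) := by gcongr; linarith [one_div_pos.2 hθ0]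
  · intro hrb
    have h2εr : 1 + θ < 2 * ε * r := by rwa [div_lt_iff₀ (by positivity), mul_comm] at hrb
    have hrμ : (1 + θ) ^ 2 * (1 / (2 * ε ^ 2)) < 2 * r ^ 2 := by
      rw [mul_one_div, div_lt_iff₀ (by positivity)]
      nlinarith [mul_self_lt_mul_self (by positivity) h2εr]
    calc _ ≤ (1 + 1 / θ) * exp (-(1 / (2 * ε ^ 2) * t)) :=
          abs_deriv_dampedSymbol_le_of_lt t hθ0 (by positivity) hrμ
      _ ≤ (3 + 1 / θ) * exp (-t / (2 * ε ^ 2)) := by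
          rw [show -(1 / (2 * ε ^ 2) * t) = -t / (2 * ε ^ 2) by ring]
          gcongr
          norm_num
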